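/- Let X_0 and X_1 be reflexive Banach spaces with X_1 continuously embedded in X_0, and let B(r) = {x in X_1 : ||x||_{X_1} ≤ r}. Suppose for some r_0 > 0 there is a map N : B(r_0) → X_1 such that (i) ||x||_{X_1} ≤ r_0 implies ||N(x)||_{X_1} ≤ r_0, and (ii) there exists alpha in (0,1) with ||N(x) - N(x')||_{X_0} ≤ alpha ||x - x'||_{X_0} whenever ||x||_{X_1}, ||x'||_{X_1} ≤ r_0. Then there exists a unique x* in X_1 with ||x*||_{X_1} ≤ r_0 and x* = N(x*). -/

import Mathlib

/-!
The Picard iterates `xₙ = Nⁿ 0` stay in the closed ball `B` of `X₁`, and the contraction makes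
`J xₙ` Cauchy in `X₀`. By reflexivity `B` is weakly compact (Banach–Alaoglu in the bidual), so
`xₙ` has a weak cluster point `x ∈ B`, and `J x` is then a weak cluster point of `J xₙ`. Norm-closed
balls are weakly closed, so a Cauchy sequence converges in norm to any of its weak cluster points:
`J xₙ → J x`. Passing to the limit in `J xₙ₊₁ = J (N xₙ)` gives `J (N x) = J x`, and injectivity of
`J` makes `x` a fixed point; uniqueness is the contraction estimate.
-/
open Filter Function Metric Set Topology NormedSpace

section WeakTopology

variable {E : Type*} [NormedAddCommGroup E] [NormedSpace ℝ E]

theorem isClosed_toWeakSpace_closedBall (x : E) (r : ℝ) :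
    IsClosed (toWeakSpace ℝ E '' closedBall x r) := by
  rw [← closure_eq_iff_isClosed, ← (convex_closedBall x r).toWeakSpace_closure ℝ,
    isClosed_closedBall.closure_eq]

theorem isCompact_toWeakSpace_closedBall (hE : Surjective (inclusionInDoubleDual ℝ E))
    (x : E) (r : ℝ) : IsCompact (toWeakSpace ℝ E '' closedBall x r) := by
  rw [← (isClosed_toWeakSpace_closedBall x r).closure_eq]
  refine isCompact_closure_of_isBounded ℝ E _ ?_ ?_
  · rw [(toWeakSpace ℝ E).injective.preimage_image]
    exact isBounded_closedBall
  · intro Φ _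
    obtain ⟨y, hy⟩ := hE (StrongDual.toWeakDual.symm Φ)
    exact ⟨y, congrArg StrongDual.toWeakDual hy⟩

theorem CauchySeq.tendsto_of_mapClusterPt_toWeakSpace {ι : Type*} [Nonempty ι] [SemilatticeSup ι]
    {u : ι → E} {a : E} (hu : CauchySeq u)
    (ha : MapClusterPt (toWeakSpace ℝ E a) atTop (toWeakSpace ℝ E ∘ u)) :
    Tendsto u atTop (𝓝 a) := by
  rw [Metric.tendsto_atTop]
  intro ε hε
  obtain ⟨N, hN⟩ := Metric.cauchySeq_iff'.1 hu (ε / 2) (half_pos hε)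
  have haN : dist a (u N) ≤ ε / 2 := by
    simpa using (isClosed_toWeakSpace_closedBall (u N) (ε / 2)).mem_of_mapClusterPt ha
      (eventually_atTop.2 ⟨N, fun n hn => mem_image_of_mem _ (hN n hn).le⟩)
  refine ⟨N, fun n hn => ?_⟩
  calc dist (u n) a ≤ dist (u n) (u N) + dist a (u N) := dist_triangle_right _ _ _
    _ < ε / 2 + ε / 2 := add_lt_add_of_lt_of_le (hN n hn) haN
    _ = ε := add_halves ε

end WeakTopology

section ContractionInWeakerMetric

variable {X Y : Type*} [MetricSpace Y] {J : X → Y} {N : X → X} {s : Set X} {α : ℝ}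

theorem dist_iterate_succ_le (hs : MapsTo N s s)
    (hN : ∀ x ∈ s, ∀ y ∈ s, dist (J (N x)) (J (N y)) ≤ α * dist (J x) (J y)) (hα : 0 ≤ α)
    {x : X} (hx : x ∈ s) (n : ℕ) :
    dist (J (N^[n] x)) (J (N^[n + 1] x)) ≤ dist (J x) (J (N x)) * α ^ n := by
  induction n with
  | zero => simp
  | succ n ih =>
    calc dist (J (N^[n + 1] x)) (J (N^[n + 2] x))
        = dist (J (N (N^[n] x))) (J (N (N^[n + 1] x))) := by
          simp only [iterate_succ_apply']
      _ ≤ α * dist (J (N^[n] x)) (J (N^[n + 1] x)) :=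
          hN _ (hs.iterate n hx) _ (hs.iterate (n + 1) hx)
      _ ≤ α * (dist (J x) (J (N x)) * α ^ n) := mul_le_mul_of_nonneg_left ih hα
      _ = dist (J x) (J (N x)) * α ^ (n + 1) := by ring

theorem cauchySeq_comp_iterate (hs : MapsTo N s s)
    (hN : ∀ x ∈ s, ∀ y ∈ s, dist (J (N x)) (J (N y)) ≤ α * dist (J x) (J y)) (hα₀ : 0 ≤ α)
    (hα₁ : α < 1) {x : X} (hx : x ∈ s) : CauchySeq fun n => J (N^[n] x) :=
  cauchySeq_of_le_geometric α _ hα₁ (dist_iterate_succ_le hs hN hα₀ hx)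

theorem map_eq_of_tendsto_comp_iterate (hs : MapsTo N s s)
    (hN : ∀ x ∈ s, ∀ y ∈ s, dist (J (N x)) (J (N y)) ≤ α * dist (J x) (J y))
    {x y : X} (hx : x ∈ s) (hy : y ∈ s)
    (hlim : Tendsto (fun n => J (N^[n] x)) atTop (𝓝 (J y))) : J (N y) = J y := by
  have hshift : Tendsto (fun n => J (N^[n + 1] x)) atTop (𝓝 (J y)) :=
    hlim.comp (tendsto_add_atTop_nat 1)
  refine tendsto_nhds_unique ?_ hshift
  rw [tendsto_iff_dist_tendsto_zero]
  have hbound : ∀ n, dist (J (N^[n + 1] x)) (J (N y)) ≤ α * dist (J (N^[n] x)) (J y) := by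
    intro n
    rw [iterate_succ_apply']
    exact hN _ (hs.iterate n hx) _ hy
  have hsmall : Tendsto (fun n => α * dist (J (N^[n] x)) (J y)) atTop (𝓝 0) := by
    simpa using (tendsto_iff_dist_tendsto_zero.1 hlim).const_mul α
  exact squeeze_zero (fun _ => dist_nonneg) hbound hsmall

theorem eq_of_isFixedPt_of_isFixedPt
    (hN : ∀ x ∈ s, ∀ y ∈ s, dist (J (N x)) (J (N y)) ≤ α * dist (J x) (J y)) (hα : α < 1)
    {x y : X} (hx : x ∈ s) (hy : y ∈ s) (hNx : IsFixedPt N x) (hNy : IsFixedPt N y) :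
    J x = J y := by
  have h := hN x hx y hy
  rw [hNx, hNy] at h
  exact dist_le_zero.1 (by nlinarith [dist_nonneg (x := J x) (y := J y)])

end ContractionInWeakerMetric

theorem stmt13 (X₀ X₁ : Type*)
    [NormedAddCommGroup X₀] [NormedSpace ℝ X₀]
    [NormedAddCommGroup X₁] [NormedSpace ℝ X₁]
    (hrefl₁ : Function.Surjective (NormedSpace.inclusionInDoubleDual ℝ X₁))
    (J : X₁ →L[ℝ] X₀) (hJ : Function.Injective J)
    (r₀ : ℝ) (hr₀ : 0 < r₀) (N : X₁ → X₁)
    (hmap : ∀ x : X₁, ‖x‖ ≤ r₀ → ‖N x‖ ≤ r₀)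
    (hcontr : ∃ α : ℝ, 0 < α ∧ α < 1 ∧ ∀ x x' : X₁, ‖x‖ ≤ r₀ → ‖x'‖ ≤ r₀ →
      ‖J (N x) - J (N x')‖ ≤ α * ‖J x - J x'‖) :
    ∃! x : X₁, ‖x‖ ≤ r₀ ∧ N x = x := by
  obtain ⟨α, hα₀, hα₁, hJN⟩ := hcontr
  have hs : MapsTo N (closedBall 0 r₀) (closedBall 0 r₀) := fun x hx => by
    simpa using hmap x (by simpa using hx)
  have hN : ∀ x ∈ closedBall (0 : X₁) r₀, ∀ y ∈ closedBall (0 : X₁) r₀,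
      dist (J (N x)) (J (N y)) ≤ α * dist (J x) (J y) := fun x hx y hy => by
    simpa [dist_eq_norm] using hJN x y (by simpa using hx) (by simpa using hy)
  have h0 : (0 : X₁) ∈ closedBall 0 r₀ := mem_closedBall_self hr₀.le
  obtain ⟨-, ⟨x, hx, rfl⟩, hcluster⟩ :=
    (isCompact_toWeakSpace_closedBall hrefl₁ 0 r₀).exists_mapClusterPt (f := atTop)
      (u := fun n => toWeakSpace ℝ X₁ (N^[n] 0))
      (tendsto_principal.2 <| .of_forall fun n => mem_image_of_mem _ (hs.iterate n h0))
  have hlim : Tendsto (fun n => J (N^[n] 0)) atTop (𝓝 (J x)) :=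
    (cauchySeq_comp_iterate hs hN hα₀.le hα₁ h0).tendsto_of_mapClusterPt_toWeakSpace
      (hcluster.continuousAt_comp (f := WeakSpace.map J) (map_continuous _).continuousAt)
  have hfix : N x = x := hJ (map_eq_of_tendsto_comp_iterate hs hN h0 hx hlim)
  refine ⟨x, ⟨by simpa using hx, hfix⟩, fun y ⟨hy, hNy⟩ => hJ ?_⟩
  exact eq_of_isFixedPt_of_isFixedPt hN hα₁ (by simpa using hy) hx hNy hfix
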